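/- Let R be a Noetherian ring and I an ideal. The inner integral closure of I is an integrally closed ideal of R. -/

import Mathlib

/-!
Everything is transported to the Rees algebra `R[It] ⊆ R[t]`: `x` is integral over `I ^ k` iff
`x t ^ k` is integral over `R[It]`. Hence the integral closures `K k` of the powers `I ^ k` are
ideals with `K k * K l ≤ K (k + l)`, and `K k` is integrally closed. Call `A ≤ K 1` inner
integral over `I` if `A ^ n ≤ K (n + 1)` for some `n`; this then holds for all larger `n`, and,
expanding `(A ⊔ B) ^ (N + M)` binomially, it passes to sums of ideals. An element lies in the
inner integral closure iff its principal ideal is inner integral, so the inner integral closure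
is an ideal `J`, and `J` is itself inner integral when it is finitely generated, e.g. when `R` is
Noetherian. Finally, if `x` is integral over `J` and `J ^ n ≤ K (n + 1)`, then `x ^ n` is
integral over `K (n + 1)`, hence lies in `K (n + 1)`.
-/

/-- The integral closure of an ideal `I`: elements `x` satisfying a monic equation
`x^d + a 1 * x^(d-1) + ... + a d = 0` with `a j ∈ I^j` for `1 ≤ j ≤ d`. -/
def Ideal.intClosure {R : Type*} [CommRing R] (I : Ideal R) : Set R :=
  {x | ∃ (d : ℕ) (a : ℕ → R), 0 < d ∧ (∀ j, 1 ≤ j → j ≤ d → a j ∈ I ^ j) ∧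
    x ^ d + ∑ j ∈ Finset.Icc 1 d, a j * x ^ (d - j) = 0}

/-- The inner integral closure of an ideal `I`:
`{ r | ∃ n ≥ 1, r ^ n ∈ integral closure of I ^ (n+1) }`. -/
def Ideal.innerIntClosure {R : Type*} [CommRing R] (I : Ideal R) : Set R :=
  {r | ∃ n : ℕ, 1 ≤ n ∧ r ^ n ∈ (I ^ (n + 1)).intClosure}

open Polynomial Finset

theorem isIntegral_of_pow_add_sum_eq_zero {S A : Type*} [CommRing S] [CommRing A] [Algebra S A]
    {z : A} {d : ℕ} (hd : 0 < d) {b : ℕ → A}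
    (hb : ∀ j ∈ Icc 1 d, b j ∈ Set.range (algebraMap S A))
    (h : z ^ d + ∑ j ∈ Icc 1 d, b j * z ^ (d - j) = 0) : IsIntegral S z := by
  set p : A[X] := X ^ d + ∑ j ∈ Icc 1 d, C (b j) * X ^ (d - j)
  have hmonic : p.Monic := by
    refine monic_X_pow_add ((degree_sum_le _ _).trans_lt ?_)
    refine (Finset.sup_lt_iff (WithBot.bot_lt_coe d)).2 fun j hj => ?_
    refine (degree_C_mul_X_pow_le _ _).trans_lt ?_
    exact WithBot.coe_lt_coe.2 (Nat.sub_lt hd (mem_Icc.1 hj).1)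
  have hlifts : p ∈ lifts (algebraMap S A) := by
    refine add_mem (X_pow_mem_lifts _ _) (sum_mem fun j hj => ?_)
    obtain ⟨s, hs⟩ := hb j hj
    exact hs ▸ mul_mem (C_mem_lifts _ s) (X_pow_mem_lifts _ _)
  obtain ⟨q, hq, -, hqm⟩ := lifts_and_natDegree_eq_and_monic hlifts hmonic
  refine ⟨q, hqm, ?_⟩
  rw [eval₂_eq_eval_map, hq]
  simpa [p, eval_finsetSum] using h

namespace Ideal

variable {R : Type*} [CommRing R] {I J A B : Ideal R} {x y : R}

theorem mem_intClosure_of_sum_range {d : ℕ} {c : ℕ → R}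
    (hc : ∀ i < d, c i ∈ I ^ (d - i)) (h : x ^ d + ∑ i ∈ range d, c i * x ^ i = 0) :
    x ∈ I.intClosure := by
  rcases Nat.eq_zero_or_pos d with rfl | hd
  · have : Subsingleton R := subsingleton_of_zero_eq_one (by simpa using h.symm)
    exact ⟨1, 0, one_pos, fun _ _ _ => zero_mem _, Subsingleton.elim _ _⟩
  refine ⟨d, fun j => c (d - j), hd, fun j hj hjd => ?_, ?_⟩
  · simpa [Nat.sub_sub_self hjd] using hc (d - j) (by omega)
  · rw [← h, add_right_inj]
    refine sum_nbij' (d - ·) (d - ·) ?_ ?_ ?_ ?_ ?_ <;> intro j hj <;>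
      simp only [mem_Icc, mem_range] at hj ⊢
    all_goals omega

theorem C_mul_X_pow_pow_add_sum (x : R) (a : ℕ → R) (k d : ℕ) :
    (C x * X ^ k) ^ d + ∑ j ∈ Icc 1 d, C (a j) * X ^ (k * j) * (C x * X ^ k) ^ (d - j) =
      C (x ^ d + ∑ j ∈ Icc 1 d, a j * x ^ (d - j)) * X ^ (k * d) := by
  rw [C_add, add_mul, map_sum, sum_mul, mul_pow, ← C_pow, ← pow_mul]
  congr 1
  refine sum_congr rfl fun j hj => ?_
  have hkd : k * d = k * j + k * (d - j) := by
    rw [← mul_add, Nat.add_sub_cancel' (mem_Icc.1 hj).2]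
  rw [hkd, pow_add, mul_pow, ← C_pow, ← pow_mul, C_mul]
  ring

theorem coeff_mul_C_mul_X_pow_pow (p : R[X]) (x : R) {k d i : ℕ} (hi : i ≤ d) :
    (p * (C x * X ^ k) ^ i).coeff (k * d) = p.coeff (k * (d - i)) * x ^ i := by
  rw [mul_pow, ← C_pow, ← pow_mul, ← mul_assoc, coeff_mul_X_pow',
    if_pos (Nat.mul_le_mul_left k hi), coeff_mul_C, Nat.mul_sub]

theorem mem_intClosure_pow_iff {k : ℕ} :
    x ∈ (I ^ k).intClosure ↔ C x * X ^ k ∈ integralClosure (reesAlgebra I) R[X] := by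
  constructor
  · rintro ⟨d, a, hd, ha, hx⟩
    refine isIntegral_of_pow_add_sum_eq_zero hd (fun j hj => ?_)
      (by rw [C_mul_X_pow_pow_add_sum, hx, C_0, zero_mul])
    refine ⟨⟨_, reesAlgebra.monomial_mem.2 ?_⟩, (C_mul_X_pow_eq_monomial).symm⟩
    exact pow_mul I k j ▸ ha j (mem_Icc.1 hj).1 (mem_Icc.1 hj).2
  · rintro ⟨q, hqm, hq⟩
    set d := q.natDegree
    rw [hqm.as_sum, eval₂_add, eval₂_X_pow, eval₂_finsetSum] at hq
    have hcoeff := congrArg (coeff · (k * d)) hq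
    simp only [coeff_add, finsetSum_coeff, eval₂_mul, eval₂_C, eval₂_X_pow, coeff_zero]
      at hcoeff
    refine mem_intClosure_of_sum_range (c := fun i => (q.coeff i : R[X]).coeff (k * (d - i)))
      (fun i _ => pow_mul I k (d - i) ▸ (q.coeff i).2 _) ?_
    rw [← hcoeff, mul_pow, ← C_pow, ← pow_mul, coeff_C_mul_X_pow, if_pos rfl]
    exact congrArg _ <| sum_congr rfl fun i hi =>
      (coeff_mul_C_mul_X_pow_pow _ _ (mem_range.1 hi).le).symm

theorem mem_intClosure_iff :
    x ∈ I.intClosure ↔ C x * X ∈ integralClosure (reesAlgebra I) R[X] := by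
  simpa using mem_intClosure_pow_iff (I := I) (k := 1)

theorem intClosure_mono (h : I ≤ J) : I.intClosure ⊆ J.intClosure :=
  fun _ ⟨d, a, hd, ha, hx⟩ => ⟨d, a, hd, fun j h1 h2 => pow_right_mono h j (ha j h1 h2), hx⟩

theorem subset_intClosure (I : Ideal R) : (I : Set R) ⊆ I.intClosure := fun x hx =>
  ⟨1, fun _ => -x, one_pos, fun j h1 h2 => by simpa [le_antisymm h2 h1] using I.neg_mem hx,
    by simp⟩

theorem add_mem_intClosure (hx : x ∈ I.intClosure) (hy : y ∈ I.intClosure) :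
    x + y ∈ I.intClosure := by
  rw [mem_intClosure_iff] at hx hy ⊢
  simpa only [C_add, add_mul] using add_mem hx hy

theorem mul_mem_intClosure (c : R) (hx : x ∈ I.intClosure) : c * x ∈ I.intClosure := by
  rw [mem_intClosure_iff] at hx ⊢
  have hc : C c ∈ integralClosure (reesAlgebra I) R[X] :=
    Subalgebra.algebraMap_mem _ (⟨C c, (reesAlgebra I).algebraMap_mem c⟩ : reesAlgebra I)
  simpa only [C_mul, mul_assoc] using mul_mem hc hx

theorem mul_mem_intClosure_pow_add {k l : ℕ} (hx : x ∈ (I ^ k).intClosure)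
    (hy : y ∈ (I ^ l).intClosure) : x * y ∈ (I ^ (k + l)).intClosure := by
  rw [mem_intClosure_pow_iff] at hx hy ⊢
  convert mul_mem hx hy using 1
  rw [C_mul, pow_add]
  ring

theorem mem_intClosure_of_pow_mem_intClosure_pow {n : ℕ} (hn : 0 < n)
    (h : x ^ n ∈ (I ^ n).intClosure) : x ∈ I.intClosure := by
  rw [mem_intClosure_pow_iff, C_pow, ← mul_pow] at h
  exact mem_intClosure_iff.2 (h.of_pow hn)

def intClosureIdeal (I : Ideal R) : Ideal R where
  carrier := I.intClosure
  zero_mem' := subset_intClosure I I.zero_mem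
  add_mem' := add_mem_intClosure
  smul_mem' c _ := mul_mem_intClosure c

theorem le_intClosureIdeal (I : Ideal R) : I ≤ I.intClosureIdeal :=
  subset_intClosure I

theorem intClosureIdeal_pow_mul_le {k l m : ℕ} (h : m ≤ k + l) :
    (I ^ k).intClosureIdeal * (I ^ l).intClosureIdeal ≤ (I ^ m).intClosureIdeal :=
  mul_le.2 fun _ hx _ hy => intClosure_mono (pow_le_pow_right h) (mul_mem_intClosure_pow_add hx hy)

theorem pow_le_intClosureIdeal_pow (h : J ≤ I.intClosureIdeal) (n : ℕ) :
    J ^ n ≤ (I ^ n).intClosureIdeal := by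
  induction n with
  | zero => simpa using top_le_iff.1 (le_intClosureIdeal ⊤)
  | succ n ih =>
    rw [pow_succ]
    refine (mul_mono ih h).trans ?_
    simpa using intClosureIdeal_pow_mul_le (I := I) (k := n) (l := 1) le_rfl

theorem intClosure_intClosureIdeal_subset (I : Ideal R) :
    I.intClosureIdeal.intClosure ⊆ I.intClosure := by
  rintro x ⟨d, a, hd, ha, hx⟩
  have hint : IsIntegral (integralClosure (reesAlgebra I) R[X]) (C x * X) := by
    have hx' := C_mul_X_pow_pow_add_sum x a 1 d
    simp only [pow_one, one_mul, hx, C_0, zero_mul] at hx'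
    refine isIntegral_of_pow_add_sum_eq_zero hd (fun j hj => ?_) hx'
    have haj := pow_le_intClosureIdeal_pow le_rfl j (ha j (mem_Icc.1 hj).1 (mem_Icc.1 hj).2)
    exact ⟨⟨_, mem_intClosure_pow_iff.1 haj⟩, rfl⟩
  exact mem_intClosure_iff.2 (isIntegral_trans _ hint)

theorem sup_pow_le_of_forall_pow_mul_pow_le {C : Ideal R} {n : ℕ}
    (h : ∀ i ≤ n, A ^ i * B ^ (n - i) ≤ C) : (A ⊔ B) ^ n ≤ C := by
  rw [← add_eq_sup, add_pow, sum_eq_sup]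
  exact Finset.sup_le fun i hi => mul_le_left.trans (h i (Nat.lt_succ_iff.1 (mem_range.1 hi)))

/-- The condition `A ≤ I.intClosureIdeal` makes the bound
`A ^ n ≤ (I ^ (n + 1)).intClosureIdeal` persist for all larger `n`. -/
def IsInnerIntegralOver (A I : Ideal R) : Prop :=
  A ≤ I.intClosureIdeal ∧ ∃ n, A ^ n ≤ (I ^ (n + 1)).intClosureIdeal

namespace IsInnerIntegralOver

theorem eventually_pow_le (hA : A.IsInnerIntegralOver I) :
    ∃ N, ∀ n ≥ N, A ^ n ≤ (I ^ (n + 1)).intClosureIdeal := by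
  obtain ⟨hA1, N, hN⟩ := hA
  refine ⟨N, fun n hn => ?_⟩
  rw [← Nat.add_sub_cancel' hn, pow_add]
  exact (mul_mono hN (pow_le_intClosureIdeal_pow hA1 _)).trans
    (intClosureIdeal_pow_mul_le (by omega))

theorem mono (hAB : A ≤ B) (hB : B.IsInnerIntegralOver I) : A.IsInnerIntegralOver I :=
  ⟨hAB.trans hB.1, hB.2.imp fun _ hn => (pow_right_mono hAB _).trans hn⟩

theorem sup (hA : A.IsInnerIntegralOver I) (hB : B.IsInnerIntegralOver I) :
    (A ⊔ B).IsInnerIntegralOver I := by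
  obtain ⟨N, hN⟩ := hA.eventually_pow_le
  obtain ⟨M, hM⟩ := hB.eventually_pow_le
  -- in `(A ⊔ B) ^ (N + M)`, every monomial `A ^ i * B ^ j` has `N ≤ i` or `M ≤ j`
  refine ⟨sup_le hA.1 hB.1, N + M, sup_pow_le_of_forall_pow_mul_pow_le fun i hi => ?_⟩
  rcases le_or_gt N i with hNi | hiN
  · exact (mul_mono (hN i hNi) (pow_le_intClosureIdeal_pow hB.1 _)).trans
      (intClosureIdeal_pow_mul_le (by omega))
  · exact (mul_mono (pow_le_intClosureIdeal_pow hA.1 _) (hM _ (by omega))).trans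
      (intClosureIdeal_pow_mul_le (by omega))

end IsInnerIntegralOver

theorem isInnerIntegralOver_span_singleton_iff {r : R} :
    (span {r}).IsInnerIntegralOver I ↔ r ∈ I.innerIntClosure := by
  constructor
  · intro h
    obtain ⟨N, hN⟩ := h.eventually_pow_le
    refine ⟨max N 1, le_max_right _ _, ?_⟩
    have := hN (max N 1) (le_max_left _ _)
    rwa [span_singleton_pow, span_singleton_le_iff_mem] at this
  · rintro ⟨n, hn, h⟩
    refine ⟨span_singleton_le_iff_mem _ |>.2 ?_, n, ?_⟩
    · exact mem_intClosure_of_pow_mem_intClosure_pow hn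
        (intClosure_mono (pow_le_pow_right n.le_succ) h)
    · rwa [span_singleton_pow, span_singleton_le_iff_mem]

def innerIntClosureIdeal (I : Ideal R) : Ideal R where
  carrier := I.innerIntClosure
  zero_mem' := ⟨1, le_rfl, by simpa using subset_intClosure _ (zero_mem _)⟩
  add_mem' {x y} hx hy := by
    rw [← isInnerIntegralOver_span_singleton_iff] at hx hy ⊢
    refine (hx.sup hy).mono (span_singleton_le_iff_mem _ |>.2 ?_)
    exact add_mem (mem_sup_left (mem_span_singleton_self x))
      (mem_sup_right (mem_span_singleton_self y))
  smul_mem' c _ := fun ⟨n, hn, h⟩ =>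
    ⟨n, hn, by simpa only [smul_eq_mul, mul_pow] using mul_mem_intClosure (c ^ n) h⟩

theorem IsInnerIntegralOver.of_fg (hA : A.FG) (h : A ≤ I.innerIntClosureIdeal) :
    A.IsInnerIntegralOver I := by
  induction A, hA using Submodule.fg_induction with
  | singleton x => exact isInnerIntegralOver_span_singleton_iff.2 (h (mem_span_singleton_self x))
  | sup A B _ _ hA hB => exact (hA (le_sup_left.trans h)).sup (hB (le_sup_right.trans h))

theorem IsInnerIntegralOver.intClosure_subset (hA : A.IsInnerIntegralOver I) :
    A.intClosure ⊆ I.innerIntClosure := by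
  intro x hx
  obtain ⟨N, hN⟩ := hA.eventually_pow_le
  have hxN : x ^ (N + 1) ∈ (A ^ (N + 1)).intClosure :=
    pow_le_intClosureIdeal_pow le_rfl _ (pow_mem_pow hx _)
  exact ⟨N + 1, N.succ_pos, intClosure_intClosureIdeal_subset _
    (intClosure_mono (hN _ N.le_succ) hxN)⟩

end Ideal

/-- The inner integral closure of `I` is an integrally closed ideal of `R`. -/
theorem stmt6 {R : Type*} [CommRing R] [IsNoetherianRing R] (I : Ideal R) :
    ∃ J : Ideal R, (J : Set R) = I.innerIntClosure ∧ J.intClosure = (J : Set R) :=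
  ⟨I.innerIntClosureIdeal, rfl, Set.Subset.antisymm
    (Ideal.IsInnerIntegralOver.of_fg (IsNoetherian.noetherian _) le_rfl).intClosure_subset
    (Ideal.subset_intClosure _)⟩
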